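/- arXiv:2010.09599 — 7 statements merged into one kernel-verified Lean document; each statement's English description precedes it below -/
import Mathlib

section
/- For all positive integers n and k with n/2 < k < n, the number of ways to split n balls into an arbitrary number of nonempty ordered bins so that the most crowded bin has exactly k balls equals (n - k + 3) * 2^(n - k - 2). -/
private lemma decomp {k : ℕ} : ∀ {l : List ℕ}, k ∈ l →
    l.takeWhile (· != k) ++ k :: (l.dropWhile (· != k)).tail = l := by
  intro l h
  induction l with
  | nil => simp at h
  | cons a l ih =>
    by_cases hak : a = k
    · subst hak; simp
    · have hkl : k ∈ l := by
        rcases List.mem_cons.1 h with h | h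
        · exact absurd h.symm hak
        · exact h
      simp [List.takeWhile_cons, List.dropWhile_cons, hak, bne_iff_ne, ih hkl]

private lemma tw {k : ℕ} : ∀ (a : List ℕ) (b : List ℕ), (∀ x ∈ a, x ≠ k) →
    (a ++ k :: b).takeWhile (· != k) = a ∧ (a ++ k :: b).dropWhile (· != k) = k :: b := by
  intro a b ha
  induction a with
  | nil => simp
  | cons x a ih =>
    have hx : x ≠ k := ha x (by simp)
    have h2 := ih (fun y hy => ha y (by simp [hy]))
    simp [List.takeWhile_cons, List.dropWhile_cons, hx, bne_iff_ne, h2.1, h2.2]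

private def T (t : ℕ) := {l : List ℕ // l.sum = t ∧ ∀ x ∈ l, 0 < x}

private def compEquiv (t : ℕ) : T t ≃ Composition t where
  toFun l := ⟨l.1, fun {i} h => l.2.2 i h, l.2.1⟩
  invFun c := ⟨c.blocks, c.blocks_sum, fun _ h => c.blocks_pos h⟩
  left_inv l := rfl
  right_inv c := rfl

private lemma sig_ext {m : ℕ} {x y : Σ j : Fin (m+1), (T (j : ℕ) × T (m - (j : ℕ)))}
    (h1 : x.2.1.1 = y.2.1.1) (h2 : x.2.2.1 = y.2.2.1) : x = y := by
  obtain ⟨⟨j, hj⟩, ⟨a, ha⟩, ⟨b, hb⟩⟩ := x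
  obtain ⟨⟨j', hj'⟩, ⟨a', ha'⟩, ⟨b', hb'⟩⟩ := y
  simp only at h1 h2
  subst h1; subst h2
  have hjj : j = j' := by have := ha.1; have := ha'.1; simp only [Fin.val_mk] at *; omega
  subst hjj
  rfl

private def mainEquiv (k m : ℕ) (hmk : m < k) :
    {l : List ℕ // l.sum = k + m ∧ (∀ x ∈ l, 0 < x) ∧ k ∈ l ∧ ∀ x ∈ l, x ≤ k} ≃
    Σ j : Fin (m + 1), (T (j : ℕ) × T (m - (j : ℕ))) where
  toFun := fun ⟨l, hs, hp, hml, _⟩ =>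
    let a := l.takeWhile (· != k)
    let b := (l.dropWhile (· != k)).tail
    have hd : a ++ k :: b = l := decomp hml
    have hsum : a.sum + (k + b.sum) = k + m := by
      rw [← hd] at hs; simpa [List.sum_append] using hs
    have hmem : ∀ x, x ∈ a ∨ x ∈ b → x ∈ l := by
      intro x hx; rw [← hd]; simp; tauto
    ⟨⟨a.sum, by omega⟩,
      ⟨a, rfl, fun x hx => hp x (hmem x (Or.inl hx))⟩,
      ⟨b, by simp only [Fin.val_mk]; omega, fun x hx => hp x (hmem x (Or.inr hx))⟩⟩
  invFun := fun ⟨j, a, b⟩ =>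
    ⟨a.1 ++ k :: b.1, by
      have hj : (j : ℕ) < m + 1 := j.isLt
      have ha := a.2.1; have hb := b.2.1
      constructor
      · simp only [List.sum_append, List.sum_cons, ha, hb]; omega
      refine ⟨?_, by simp, ?_⟩
      · intro x hx
        simp only [List.mem_append, List.mem_cons] at hx
        rcases hx with h | h | h
        · exact a.2.2 x h
        · omega
        · exact b.2.2 x h
      · intro x hx
        simp only [List.mem_append, List.mem_cons] at hx
        rcases hx with h | h | h
        · have := List.single_le_sum (fun y _ => Nat.zero_le y) x h; omega
        · omega
        · have := List.single_le_sum (fun y _ => Nat.zero_le y) x h; omega⟩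
  left_inv := fun ⟨l, hs, hp, hml, hle⟩ => Subtype.ext (decomp hml)
  right_inv := fun ⟨j, a, b⟩ => by
    have hj : (j : ℕ) < m + 1 := j.isLt
    have hane : ∀ x ∈ a.1, x ≠ k := by
      intro x hx
      have h1 := List.single_le_sum (fun y _ => Nat.zero_le y) x hx
      have h2 := a.2.1
      omega
    have htw := tw a.1 b.1 hane
    apply sig_ext
    · simp [htw.1]
    · simp [htw.2]

private lemma cardS (k m : ℕ) (hmk : m < k) :
    Nat.card {l : List ℕ // l.sum = k + m ∧ (∀ x ∈ l, 0 < x) ∧ k ∈ l ∧ ∀ x ∈ l, x ≤ k}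
      = ∑ j ∈ Finset.range (m + 1), 2 ^ (j - 1) * 2 ^ (m - j - 1) := by
  have e := (mainEquiv k m hmk).trans
    (Equiv.sigmaCongrRight fun j => (compEquiv (j : ℕ)).prodCongr (compEquiv (m - (j : ℕ))))
  rw [Nat.card_congr e, Nat.card_eq_fintype_card, Fintype.card_sigma]
  simp only [Fintype.card_prod, composition_card]
  exact Fin.sum_univ_eq_sum_range (fun j => 2 ^ (j - 1) * 2 ^ (m - j - 1)) (m+1)

private lemma sumS (M : ℕ) :
    (∑ j ∈ Finset.range (M + 2), 2 ^ (j - 1) * 2 ^ (M + 1 - j - 1))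
      = 2 ^ M + 2 ^ M + M * 2 ^ (M - 1) := by
  rw [Finset.sum_range_succ, Finset.sum_range_succ']
  have h1 : ∀ i ∈ Finset.range M, 2 ^ (i + 1 - 1) * 2 ^ (M + 1 - (i + 1) - 1) = 2 ^ (M - 1) := by
    intro i hi
    rw [Finset.mem_range] at hi
    rw [← pow_add]
    congr 1
    omega
  rw [Finset.sum_congr rfl h1, Finset.sum_const, Finset.card_range]
  simp only [Nat.add_sub_cancel, Nat.sub_self, pow_zero, mul_one, Nat.zero_sub, Nat.sub_zero]
  ring

/-- B_{n,k}: number of compositions of `n` (ordered lists of positive integers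
summing to `n`) whose maximum part equals `k`. -/
theorem stmt_0 (n k : ℕ) (hn : 0 < n) (h1 : n < 2 * k) (h2 : k < n) :
    (Nat.card {l : List ℕ // l.sum = n ∧ (∀ x ∈ l, 0 < x) ∧ k ∈ l ∧ ∀ x ∈ l, x ≤ k} : ℚ)
      = ((n : ℚ) - k + 3) * 2 ^ ((n : ℤ) - k - 2) := by
  obtain ⟨M, hM⟩ : ∃ M, n = k + (M + 1) := ⟨n - k - 1, by omega⟩
  subst hM
  have hmk : M + 1 < k := by omega
  rw [cardS k (M + 1) hmk, sumS M]
  have hexp : ((k : ℤ) + ((M : ℤ) + 1)) - k - 2 = (M : ℤ) - 1 := by ring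
  push_cast
  rw [hexp]
  cases M with
  | zero => norm_num
  | succ M' =>
    have h3 : ((M' + 1 : ℕ) : ℤ) - 1 = ((M' : ℕ) : ℤ) := by push_cast; ring
    rw [h3, zpow_natCast]
    simp only [Nat.add_sub_cancel]
    push_cast
    ring
end

section
/- For all positive integers n, k, ℓ with n/2 < k < n and 2 ≤ ℓ ≤ n - k + 1, the number of compositions of n into ℓ parts whose maximum part equals k is ℓ * C(n - k - 1, ℓ - 2). -/
private lemma comp_finite (r N : ℕ) :
    Finite {y : Fin r → ℕ // (∑ j, y j) = N ∧ ∀ j, 0 < y j} := by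
  apply Finite.of_injective (α := {y : Fin r → ℕ // (∑ j, y j) = N ∧ ∀ j, 0 < y j})
    (fun y => (fun j => (⟨y.1 j, by
      have h := Finset.single_le_sum (f := y.1) (fun i _ => Nat.zero_le (y.1 i))
        (Finset.mem_univ j)
      rw [y.2.1] at h
      omega⟩ : Fin (N + 1)) : Fin r → Fin (N + 1)))
  intro a b h
  exact Subtype.ext (funext fun j => congrArg Fin.val (congrFun h j))

private lemma comp_card : ∀ N : ℕ, ∀ r : ℕ, 1 ≤ N →
    Nat.card {y : Fin (r + 1) → ℕ // (∑ j, y j) = N ∧ ∀ j, 0 < y j}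
      = Nat.choose (N - 1) r := by
  intro N
  induction N using Nat.strong_induction_on with
  | _ N IH =>
    intro r hN
    match r with
    | 0 =>
      have e : {y : Fin 1 → ℕ // (∑ j, y j) = N ∧ ∀ j, 0 < y j} ≃ Unit :=
        { toFun := fun _ => Unit.unit
          invFun := fun _ => ⟨fun _ => N, by simp, fun _ => hN⟩
          left_inv := by
            rintro ⟨y, hs, hp⟩
            refine Subtype.ext (funext fun j => ?_)
            have hj : j = 0 := Subsingleton.elim _ _
            rw [hj]
            simpa [Fin.sum_univ_one] using hs.symm
          right_inv := fun _ => rfl }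
      rw [Nat.card_congr e]
      simp
    | (s + 1) =>
      rcases Nat.lt_or_ge N 2 with hN2 | hN2
      · -- N = 1 : empty
        have hN1 : N = 1 := by omega
        subst hN1
        haveI : IsEmpty {y : Fin (s + 1 + 1) → ℕ // (∑ j, y j) = 1 ∧ ∀ j, 0 < y j} := by
          constructor
          rintro ⟨y, hs, hp⟩
          have h0 := hp 0
          have h1 := hp (Fin.succ 0)
          rw [Fin.sum_univ_succ, Fin.sum_univ_succ] at hs
          omega
        rw [Nat.card_of_isEmpty]
        simp
      · obtain ⟨M, rfl⟩ : ∃ M, N = M + 2 := ⟨N - 2, by omega⟩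
        have e : {y : Fin (s + 2) → ℕ // (∑ j, y j) = M + 2 ∧ ∀ j, 0 < y j} ≃
            {y : Fin (s + 1) → ℕ // (∑ j, y j) = M + 1 ∧ ∀ j, 0 < y j} ⊕
            {y : Fin (s + 2) → ℕ // (∑ j, y j) = M + 1 ∧ ∀ j, 0 < y j} :=
          { toFun := fun y =>
              if h : y.1 0 = 1 then
                Sum.inl ⟨Fin.tail y.1, by
                  have hs := y.2.1
                  rw [Fin.sum_univ_succ] at hs
                  show (∑ j : Fin (s + 1), y.1 j.succ) = M + 1
                  omega, fun j => y.2.2 j.succ⟩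
              else
                Sum.inr ⟨Fin.cons (y.1 0 - 1) (Fin.tail y.1), by
                  have hs := y.2.1
                  have hp := y.2.2 0
                  rw [Fin.sum_univ_succ] at hs
                  rw [Fin.sum_cons]
                  show (y.1 0 - 1) + (∑ j : Fin (s + 1), y.1 j.succ) = M + 1
                  omega, by
                  intro j
                  refine Fin.cases ?_ ?_ j
                  · have := y.2.2 0
                    simp only [Fin.cons_zero]
                    omega
                  · intro i
                    simpa [Fin.tail] using y.2.2 i.succ⟩
            invFun := fun z =>
              match z with
              | Sum.inl z => ⟨Fin.cons 1 z.1, by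
                  rw [Fin.sum_cons, z.2.1]
                  omega, by
                  intro j
                  refine Fin.cases ?_ ?_ j
                  · simp
                  · intro i; simpa using z.2.2 i⟩
              | Sum.inr z => ⟨Fin.cons (z.1 0 + 1) (Fin.tail z.1), by
                  have hs := z.2.1
                  rw [Fin.sum_univ_succ] at hs
                  rw [Fin.sum_cons]
                  show (z.1 0 + 1) + (∑ j : Fin (s + 1), z.1 j.succ) = M + 2
                  omega, by
                  intro j
                  refine Fin.cases ?_ ?_ j
                  · simp
                  · intro i; simpa [Fin.tail] using z.2.2 i.succ⟩
            left_inv := by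
              rintro ⟨y, hs, hp⟩
              by_cases h : y 0 = 1
              · simp only [dif_pos h]
                refine Subtype.ext (funext fun j => ?_)
                refine Fin.cases ?_ ?_ j
                · simp [h]
                · intro i; simp [Fin.tail]
              · simp only [dif_neg h]
                have h0 := hp 0
                refine Subtype.ext (funext fun j => ?_)
                refine Fin.cases ?_ ?_ j
                · simp only [Fin.cons_zero, Fin.tail_cons]
                  omega
                · intro i; simp [Fin.tail]
            right_inv := by
              rintro (⟨z, hs, hp⟩ | ⟨z, hs, hp⟩)
              · dsimp only
                rw [dif_pos (by simp)]
                simp [Fin.tail_cons]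
              · have h0 := hp 0
                dsimp only
                rw [dif_neg (by simp; omega)]
                congr 1
                refine Subtype.ext (funext fun j => ?_)
                refine Fin.cases ?_ ?_ j
                · simp only [Fin.cons_zero, Fin.tail_cons]
                  omega
                · intro i; simp [Fin.tail] }
        rw [Nat.card_congr e]
        haveI := comp_finite (s + 1) (M + 1)
        haveI := comp_finite (s + 2) (M + 1)
        rw [Nat.card_sum, IH (M + 1) (by omega) s (by omega),
          IH (M + 1) (by omega) (s + 1) (by omega)]
        simp [Nat.choose_succ_succ]

/-- M_{n,ℓ,k}: compositions of `n` into `ℓ` positive parts with maximum part `k`. -/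
theorem stmt_1 (n k ℓ : ℕ) (hn : 0 < n) (hk : 0 < k) (h1 : n < 2 * k) (h2 : k < n)
    (h3 : 2 ≤ ℓ) (h4 : ℓ ≤ n - k + 1) :
    Nat.card {x : Fin ℓ → ℕ // (∑ i, x i) = n ∧ (∀ i, 0 < x i) ∧
        (∃ i, x i = k) ∧ ∀ i, x i ≤ k}
      = ℓ * Nat.choose (n - k - 1) (ℓ - 2) := by
  obtain ⟨m, rfl⟩ : ∃ m, ℓ = m + 2 := ⟨ℓ - 2, by omega⟩
  have hk_le : k ≤ n := le_of_lt h2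
  set S := {y : Fin (m + 1) → ℕ // (∑ j, y j) = n - k ∧ ∀ j, 0 < y j} with hSdef
  have Fdef : ∀ p : Fin (m + 2) × S,
      ((∑ i, (p.1.insertNth k p.2.1 : Fin (m + 2) → ℕ) i) = n ∧
        (∀ i, 0 < (p.1.insertNth k p.2.1 : Fin (m + 2) → ℕ) i) ∧
        (∃ i, (p.1.insertNth k p.2.1 : Fin (m + 2) → ℕ) i = k) ∧
        ∀ i, (p.1.insertNth k p.2.1 : Fin (m + 2) → ℕ) i ≤ k) := by
    rintro ⟨i, y, hys, hyp⟩
    have hbd : ∀ j, y j ≤ n - k := by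
      intro j
      have h := Finset.single_le_sum (f := y) (fun t _ => Nat.zero_le (y t))
        (Finset.mem_univ j)
      rw [hys] at h
      exact h
    refine ⟨?_, ?_, ⟨i, by simp⟩, ?_⟩
    · rw [Fin.sum_univ_succAbove _ i]
      simp only [Fin.insertNth_apply_same, Fin.insertNth_apply_succAbove]
      rw [hys]
      omega
    · intro t
      rcases eq_or_ne t i with rfl | ht
      · simpa using hk
      · obtain ⟨j, rfl⟩ := Fin.exists_succAbove_eq ht
        simpa using hyp j
    · intro t
      rcases eq_or_ne t i with rfl | ht
      · simp
      · obtain ⟨j, rfl⟩ := Fin.exists_succAbove_eq ht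
        simp only [Fin.insertNth_apply_succAbove]
        have := hbd j
        omega
  let F : Fin (m + 2) × S →
      {x : Fin (m + 2) → ℕ // (∑ i, x i) = n ∧ (∀ i, 0 < x i) ∧
        (∃ i, x i = k) ∧ ∀ i, x i ≤ k} :=
    fun p => ⟨p.1.insertNth k p.2.1, Fdef p⟩
  have hF : Function.Bijective F := by
    constructor
    · rintro ⟨i, y, hys, hyp⟩ ⟨i', y', hys', hyp'⟩ h
      have hv : (i.insertNth k y : Fin (m + 2) → ℕ) = i'.insertNth k y' :=
        congrArg Subtype.val h
      have hii : i = i' := by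
        by_contra hne
        obtain ⟨j, hj⟩ := Fin.exists_succAbove_eq hne
        have h1' := congrFun hv i
        rw [Fin.insertNth_apply_same] at h1'
        rw [← hj, Fin.insertNth_apply_succAbove] at h1'
        have hb := Finset.single_le_sum (f := y') (fun t _ => Nat.zero_le (y' t))
          (Finset.mem_univ j)
        rw [hys'] at hb
        omega
      subst hii
      have hyy : y = y' := by
        have := congrArg (Fin.removeNth i) hv
        rwa [Fin.removeNth_insertNth, Fin.removeNth_insertNth] at this
      subst hyy
      rfl
    · rintro ⟨x, hs, hp, hex, hle⟩
      obtain ⟨i, hi⟩ := hex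
      have hsum : (∑ j : Fin (m + 1), Fin.removeNth i x j) = n - k := by
        have hs2 := hs
        rw [Fin.sum_univ_succAbove _ i, hi] at hs2
        show (∑ j : Fin (m + 1), x (i.succAbove j)) = n - k
        omega
      refine ⟨(i, ⟨Fin.removeNth i x, hsum, fun j => hp _⟩), ?_⟩
      refine Subtype.ext ?_
      have h2' := Fin.insertNth_self_removeNth i x
      rw [hi] at h2'
      exact h2'
  rw [← Nat.card_congr (Equiv.ofBijective F hF), Nat.card_prod,
    Nat.card_eq_fintype_card, Fintype.card_fin]
  rw [hSdef, comp_card (n - k) m (by omega)]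
  rfl
end

section
/- For every positive integer k, the number of compositions of 2k (into any number of parts) whose maximum part equals k is (k + 3) * 2^(k - 2) - 1. -/
def CompL (n : ℕ) := {l : List ℕ // l.sum = n ∧ ∀ x ∈ l, 0 < x}

def compLEquiv (n : ℕ) : CompL n ≃ Composition n where
  toFun c := ⟨c.1, fun hi => c.2.2 _ hi, c.2.1⟩
  invFun c := ⟨c.blocks, c.blocks_sum, fun _ hx => c.blocks_pos hx⟩
  left_inv c := rfl
  right_inv c := rfl

instance (n : ℕ) : Fintype (CompL n) := Fintype.ofEquiv _ (compLEquiv n).symm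

lemma card_compL (n : ℕ) : Fintype.card (CompL n) = 2 ^ (n - 1) := by
  rw [Fintype.card_congr (compLEquiv n), composition_card]

def PairC (k : ℕ) := {p : List ℕ × List ℕ // p.1.sum + p.2.sum = k ∧ (∀ x ∈ p.1, 0 < x) ∧ ∀ x ∈ p.2, 0 < x}

def pairFst {k : ℕ} (p : PairC k) : Fin (k + 1) :=
  ⟨p.1.1.sum, by have := p.2.1; omega⟩

def fiberEquiv (k : ℕ) (i : Fin (k + 1)) :
    {p : PairC k // pairFst p = i} ≃ CompL i × CompL (k - i) where
  toFun q :=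
    have h1 : q.1.1.1.sum = (i : ℕ) := congrArg Fin.val q.2
    (⟨q.1.1.1, h1, q.1.2.2.1⟩, ⟨q.1.1.2, by have := q.1.2.1; omega, q.1.2.2.2⟩)
  invFun AB :=
    ⟨⟨(AB.1.1, AB.2.1), by
        have h1 := AB.1.2.1; have h2 := AB.2.2.1
        have : (i : ℕ) ≤ k := by omega
        exact ⟨by simp only [h1, h2]; omega, AB.1.2.2, AB.2.2.2⟩⟩,
      by apply Fin.ext; exact AB.1.2.1⟩
  left_inv q := rfl
  right_inv AB := rfl

def pairCEquiv (k : ℕ) : PairC k ≃ Σ i : Fin (k + 1), CompL i × CompL (k - i) :=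
  (Equiv.sigmaFiberEquiv (pairFst (k := k))).symm.trans
    (Equiv.sigmaCongrRight (fiberEquiv k))

instance (k : ℕ) : Fintype (PairC k) := Fintype.ofEquiv _ (pairCEquiv k).symm

lemma card_pairC (k : ℕ) :
    Fintype.card (PairC k) = ∑ i ∈ Finset.range (k + 1), 2 ^ (i - 1) * 2 ^ (k - i - 1) := by
  rw [Fintype.card_congr (pairCEquiv k), Fintype.card_sigma]
  rw [Fin.sum_univ_eq_sum_range (fun i => Fintype.card (CompL i × CompL (k - i)))]
  exact Finset.sum_congr rfl fun i _ => by rw [Fintype.card_prod, card_compL, card_compL]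

lemma sum_pows (k : ℕ) (hk : 1 ≤ k) :
    ∑ i ∈ Finset.range (k + 1), 2 ^ (i - 1) * 2 ^ (k - i - 1)
      = 2 ^ k + (k - 1) * 2 ^ (k - 2) := by
  rw [Finset.sum_range_succ]
  obtain ⟨m, rfl⟩ : ∃ m, k = m + 1 := ⟨k - 1, by omega⟩
  rw [Finset.sum_range_succ']
  have hmid : ∀ i ∈ Finset.range m, 2 ^ (i + 1 - 1) * 2 ^ (m + 1 - (i + 1) - 1)
      = 2 ^ (m + 1 - 2) := by
    intro i hi
    rw [Finset.mem_range] at hi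
    rw [← pow_add]
    congr 1
    omega
  rw [Finset.sum_congr rfl hmid, Finset.sum_const, Finset.card_range, smul_eq_mul]
  rcases Nat.eq_zero_or_pos m with rfl | hm
  · simp
  · obtain ⟨n, rfl⟩ : ∃ n, m = n + 1 := ⟨m - 1, by omega⟩
    have e1 : n + 1 + 1 - 2 = n := by omega
    have e2 : (0 : ℕ) - 1 = 0 := by omega
    have e3 : n + 1 + 1 - 0 - 1 = n + 1 := by omega
    have e4 : n + 1 + 1 - 1 = n + 1 := by omega
    have e5 : n + 1 + 1 - (n + 1 + 1) - 1 = 0 := by omega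
    rw [e1, e2, e3, e4, e5]
    have e7 : (2:ℕ) ^ (n + 1 + 1) = 4 * 2 ^ n := by rw [pow_succ, pow_succ]; ring
    have e8 : (2:ℕ) ^ (n + 1) = 2 * 2 ^ n := by rw [pow_succ]; ring
    rw [e7, e8]
    ring

lemma sum_zero_nil (l : List ℕ) (hp : ∀ x ∈ l, 0 < x) (hs : l.sum = 0) : l = [] := by
  cases l with
  | nil => rfl
  | cons a t => exfalso; have := hp a (by simp); simp at hs; omega

lemma eq_single (k : ℕ) (A : List ℕ) (hp : ∀ x ∈ A, 0 < x) (hs : A.sum = k) (hm : k ∈ A) :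
    A = [k] := by
  obtain ⟨X, Y, rfl⟩ := List.append_of_mem hm
  simp only [List.sum_append, List.sum_cons] at hs
  have hX : X = [] := sum_zero_nil X (fun x hx => hp x (by simp [hx])) (by omega)
  have hY : Y = [] := sum_zero_nil Y (fun x hx => hp x (by simp [hx])) (by omega)
  simp [hX, hY]

lemma tw_dw (k : ℕ) : ∀ (A B : List ℕ), k ∉ A →
    (A ++ k :: B).takeWhile (fun x => x ≠ k) = A ∧
    (A ++ k :: B).dropWhile (fun x => x ≠ k) = k :: B := by
  intro A
  induction A with
  | nil =>
    intro B _
    constructor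
    · rw [List.nil_append, List.takeWhile_cons_of_neg (by simp)]
    · rw [List.nil_append, List.dropWhile_cons_of_neg (by simp)]
  | cons a t ih =>
    intro B h
    have ha : a ≠ k := fun e => h (by simp [e])
    have ht : k ∉ t := fun e => h (by simp [e])
    obtain ⟨h1, h2⟩ := ih B ht
    constructor
    · rw [List.cons_append, List.takeWhile_cons_of_pos (by simp [ha]), h1]
    · rw [List.cons_append, List.dropWhile_cons_of_pos (by simp [ha]), h2]

lemma struct (k : ℕ) : ∀ (l : List ℕ), k ∈ l →
    (l.takeWhile (fun x => x ≠ k) ++ k :: (l.dropWhile (fun x => x ≠ k)).tail = l) ∧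
    k ∉ l.takeWhile (fun x => x ≠ k) := by
  intro l
  induction l with
  | nil => intro h; simp at h
  | cons a t ih =>
    intro h
    by_cases ha : a = k
    · subst ha
      rw [List.takeWhile_cons_of_neg (by simp), List.dropWhile_cons_of_neg (by simp)]
      simp
    · have ht : k ∈ t := by
        rcases List.mem_cons.1 h with h' | h'
        · exact absurd h'.symm ha
        · exact h'
      obtain ⟨h1, h2⟩ := ih ht
      rw [List.takeWhile_cons_of_pos (by simp [ha]), List.dropWhile_cons_of_pos (by simp [ha])]
      refine ⟨by rw [List.cons_append, h1], ?_⟩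
      intro hmem
      rcases List.mem_cons.1 hmem with h' | h'
      · exact ha h'.symm
      · exact h2 h'

def Sk (k : ℕ) := {l : List ℕ // l.sum = 2 * k ∧ (∀ x ∈ l, 0 < x) ∧ k ∈ l ∧ ∀ x ∈ l, x ≤ k}

def e3toFun (k : ℕ) (hk : 0 < k) (p : PairC k) : Sk k ⊕ Unit :=
  if _h : p.1 = ([k], []) then Sum.inr ()
  else Sum.inl ⟨p.1.1 ++ k :: p.1.2, by
    obtain ⟨⟨A, B⟩, hsum0, hA0, hB0⟩ := p
    have hsum : A.sum + B.sum = k := hsum0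
    have hA : ∀ x ∈ A, 0 < x := hA0
    have hB : ∀ x ∈ B, 0 < x := hB0
    dsimp only
    refine ⟨by simp only [List.sum_append, List.sum_cons]; omega, ?_, by simp, ?_⟩
    · intro x hx
      rcases List.mem_append.1 hx with h' | h'
      · exact hA x h'
      · rcases List.mem_cons.1 h' with h'' | h''
        · omega
        · exact hB x h''
    · intro x hx
      rcases List.mem_append.1 hx with h' | h'
      · have := List.le_sum_of_mem h'; omega
      · rcases List.mem_cons.1 h' with h'' | h''
        · omega
        · have := List.le_sum_of_mem h''; omega⟩

def e3invFun (k : ℕ) (hk : 0 < k) (s : Sk k ⊕ Unit) : PairC k :=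
  match s with
  | Sum.inr _ => ⟨([k], []), by simp, by intro x hx; simp at hx; omega, by simp⟩
  | Sum.inl ⟨l, hl⟩ => ⟨(l.takeWhile (fun x => x ≠ k), (l.dropWhile (fun x => x ≠ k)).tail), by
      obtain ⟨hsum, hpos, hmem, hle⟩ := hl
      obtain ⟨h1, h2⟩ := struct k l hmem
      have hs := congrArg List.sum h1
      simp only [List.sum_append, List.sum_cons] at hs
      dsimp only
      refine ⟨by omega, ?_, ?_⟩
      · intro x hx
        exact hpos x (by rw [← h1]; exact List.mem_append_left _ hx)
      · intro x hx
        exact hpos x (by rw [← h1]; exact List.mem_append_right _ (List.mem_cons_of_mem _ hx))⟩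

def e3 (k : ℕ) (hk : 0 < k) : PairC k ≃ Sk k ⊕ Unit where
  toFun := e3toFun k hk
  invFun := e3invFun k hk
  left_inv p := by
    by_cases h : p.1 = ([k], [])
    · rw [e3toFun, dif_pos h]
      exact Subtype.ext h.symm
    · rw [e3toFun, dif_neg h]
      have hknA : k ∉ p.1.1 := by
        intro hmem
        obtain ⟨⟨A, B⟩, hsum0, hA0, hB0⟩ := p
        have hsum : A.sum + B.sum = k := hsum0
        have hA : ∀ x ∈ A, 0 < x := hA0
        have hB : ∀ x ∈ B, 0 < x := hB0
        have hk1 : k ≤ A.sum := List.le_sum_of_mem hmem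
        have hAs : A.sum = k := by omega
        have hA1 : A = [k] := eq_single k A hA hAs hmem
        have hB1 : B = [] := sum_zero_nil B hB (by omega)
        exact h (show (A, B) = (([k] : List ℕ), ([] : List ℕ)) by rw [hA1, hB1])
      obtain ⟨h1, h2⟩ := tw_dw k p.1.1 p.1.2 hknA
      apply Subtype.ext
      rw [e3invFun]
      simp only [h1, h2, List.tail_cons]
  right_inv s := by
    match s with
    | Sum.inr u =>
      cases u
      rw [e3invFun]; unfold e3toFun; rw [dif_pos rfl]
    | Sum.inl ⟨l, hl⟩ =>
      obtain ⟨h1, h2⟩ := struct k l hl.2.2.1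
      rw [e3invFun]; unfold e3toFun
      rw [dif_neg]
      · exact congrArg Sum.inl (Subtype.ext h1)
      · intro hc
        apply h2
        have : l.takeWhile (fun x => x ≠ k) = [k] := congrArg Prod.fst hc
        rw [this]; simp

lemma card_Sk (k : ℕ) (hk : 0 < k) :
    Nat.card (Sk k) + 1 = 2 ^ k + (k - 1) * 2 ^ (k - 2) := by
  have hfin : Finite (Sk k) :=
    Finite.of_injective (fun s => (e3 k hk).symm (Sum.inl s))
      fun a b hab => by simpa using (e3 k hk).symm.injective hab
  have := Nat.card_congr (e3 k hk)
  rw [Nat.card_eq_fintype_card, card_pairC, sum_pows k hk] at this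
  rw [Nat.card_sum] at this
  simp only [Nat.card_unique] at this
  omega

/-- B_{2k,k}: compositions of `2k` whose maximum part equals `k`. -/
theorem stmt_2 (k : ℕ) (hk : 0 < k) :
    (Nat.card {l : List ℕ // l.sum = 2 * k ∧ (∀ x ∈ l, 0 < x) ∧ k ∈ l ∧ ∀ x ∈ l, x ≤ k} : ℚ)
      = ((k : ℚ) + 3) * 2 ^ ((k : ℤ) - 2) - 1 := by
  have h := card_Sk k hk
  have hc : Nat.card {l : List ℕ // l.sum = 2 * k ∧ (∀ x ∈ l, 0 < x) ∧ k ∈ l ∧ ∀ x ∈ l, x ≤ k}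
      = Nat.card (Sk k) := rfl
  rw [hc]
  rcases Nat.lt_or_ge k 2 with hk2 | hk2
  · have hk1 : k = 1 := by omega
    subst hk1
    have h1 : Nat.card (Sk 1) = 1 := by omega
    rw [h1]
    norm_num
  · obtain ⟨m, rfl⟩ : ∃ m, k = m + 2 := ⟨k - 2, by omega⟩
    have e0 : ((m + 2 : ℕ) : ℤ) - 2 = ((m : ℕ) : ℤ) := by push_cast; ring
    rw [e0, zpow_natCast]
    have h2 : Nat.card (Sk (m + 2)) + 1 = 2 ^ (m + 2) + (m + 1) * 2 ^ m := by
      have e1 : m + 2 - 1 = m + 1 := by omega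
      have e2 : m + 2 - 2 = m := by omega
      rw [e1, e2] at h
      exact h
    have h3 := congrArg (Nat.cast : ℕ → ℚ) h2
    push_cast at h3
    have e3 : (2 : ℚ) ^ (m + 2) = 4 * 2 ^ m := by ring
    rw [e3] at h3
    push_cast
    linarith
end

section
/- For positive integers j < k, the number of compositions of 2k + j (into any number of parts) whose maximum part equals k is (k + j + 3) * 2^(k + j - 2) - (3j² + 19j + 18) * 2^(j - 4). -/
open Finset


def compFinset : ℕ → ℕ → Finset (List ℕ)
  | 0, _ => {[]}
  | (n+1), b =>
    (Finset.Icc 1 (min (n+1) b)).attach.biUnion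
      (fun i => (compFinset (n+1 - i.1) b).image (fun l => i.1 :: l))
  termination_by n _ => n
  decreasing_by
    have h1 : 1 ≤ i.1 := (Finset.mem_Icc.mp i.2).1
    omega

lemma card_compFinset_succ (n b : ℕ) :
    (compFinset (n+1) b).card
      = ∑ i ∈ Finset.range (min (n+1) b), (compFinset (n - i) b).card := by
  have hdisj : ∀ x ∈ (Finset.Icc 1 (min (n+1) b)).attach,
      ∀ y ∈ (Finset.Icc 1 (min (n+1) b)).attach, x ≠ y →
      Disjoint ((compFinset (n+1 - x.1) b).image (fun l => x.1 :: l))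
        ((compFinset (n+1 - y.1) b).image (fun l => y.1 :: l)) := by
    intro x _ y _ hxy
    apply Finset.disjoint_left.mpr
    rintro l hl hl'
    simp only [Finset.mem_image] at hl hl'
    obtain ⟨t1, -, h1⟩ := hl
    obtain ⟨t2, -, h2⟩ := hl'
    apply hxy
    apply Subtype.ext
    rw [← h2] at h1
    exact (List.cons.injEq _ _ _ _ ▸ h1).1
  rw [compFinset, Finset.card_biUnion hdisj]
  have h2 : ∀ u ∈ (Finset.Icc 1 (min (n+1) b)).attach,
      ((compFinset (n+1 - u.1) b).image (fun l => u.1 :: l)).card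
        = (compFinset (n+1 - u.1) b).card := by
    intro u _
    exact Finset.card_image_of_injective _ (fun a b h => (List.cons.injEq _ _ _ _ ▸ h).2)
  rw [Finset.sum_congr rfl h2,
    Finset.sum_attach (Finset.Icc 1 (min (n+1) b)) (fun i => (compFinset (n + 1 - i) b).card),
    ← Finset.Ico_add_one_right_eq_Icc, Finset.sum_Ico_eq_sum_range]
  apply Finset.sum_congr
  · congr 1
  · intro i hi
    congr 2
    omega

lemma mem_compFinset (n b : ℕ) (l : List ℕ) :
    l ∈ compFinset n b ↔ l.sum = n ∧ ∀ x ∈ l, 1 ≤ x ∧ x ≤ b := by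
  induction n using Nat.strong_induction_on generalizing l with
  | _ n ih =>
    match n, l with
    | 0, [] => simp [compFinset]
    | 0, (x :: t) =>
      simp only [compFinset, Finset.mem_singleton]
      constructor
      · rintro ⟨⟩
      · rintro ⟨hs, hp⟩
        have := hp x (by simp)
        have : 0 < (x :: t).sum := by
          simp only [List.sum_cons]; omega
        omega
    | (n+1), [] =>
      simp only [compFinset, Finset.mem_biUnion]
      constructor
      · rintro ⟨i, hi, hmem⟩
        simp at hmem
      · rintro ⟨hs, -⟩
        simp at hs
    | (n+1), (x :: t) =>
      rw [compFinset]
      simp only [Finset.mem_biUnion, Finset.mem_attach, true_and, Finset.mem_image,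
        Subtype.exists]
      constructor
      · rintro ⟨i, hi, t', ht', heq⟩
        obtain ⟨hi1, hi2⟩ := Finset.mem_Icc.mp hi
        cases heq
        rw [ih _ (by omega)] at ht'
        obtain ⟨hsum, hall⟩ := ht'
        refine ⟨by simp [hsum]; omega, ?_⟩
        intro y hy
        rcases List.mem_cons.mp hy with h | h
        · subst h; exact ⟨hi1, by omega⟩
        · exact hall y h
      · rintro ⟨hsum, hall⟩
        have hx := hall x (by simp)
        have hxn : x ≤ n + 1 := by
          simp only [List.sum_cons] at hsum; omega
        refine ⟨x, Finset.mem_Icc.mpr ⟨hx.1, by omega⟩, t, ?_, rfl⟩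
        rw [ih _ (by omega)]
        refine ⟨?_, fun y hy => hall y (List.mem_cons_of_mem _ hy)⟩
        simp only [List.sum_cons] at hsum; omega

lemma compFinset_zero (b : ℕ) : compFinset 0 b = {[]} := by rw [compFinset]
lemma card_compFinset_zero (b : ℕ) : (compFinset 0 b).card = 1 := by
  rw [compFinset_zero]; rfl

lemma rec_small (n b : ℕ) (h : n + 2 ≤ b) :
    (compFinset (n+2) b).card = 2 * (compFinset (n+1) b).card := by
  have h1 := card_compFinset_succ (n+1) b
  have h2 := card_compFinset_succ n b
  rw [min_eq_left (by omega)] at h1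
  rw [min_eq_left (by omega)] at h2
  have hcong : ∀ i ∈ Finset.range (n+1),
      (compFinset (n + 1 - (i+1)) b).card = (compFinset (n - i) b).card := by
    intro i _; congr 2; omega
  rw [Finset.sum_range_succ', Finset.sum_congr rfl hcong] at h1
  simp only [Nat.sub_zero] at h1
  rw [show n+1+1 = n+2 from rfl] at h1
  omega

lemma rec_large (n b : ℕ) (hb : 1 ≤ b) (h : b ≤ n + 1) :
    (compFinset (n+2) b).card + (compFinset (n+1-b) b).card
      = 2 * (compFinset (n+1) b).card := by
  obtain ⟨c, rfl⟩ : ∃ c, b = c + 1 := ⟨b - 1, by omega⟩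
  have h1 := card_compFinset_succ (n+1) (c+1)
  have h2 := card_compFinset_succ n (c+1)
  rw [min_eq_right (by omega)] at h1
  rw [min_eq_right (by omega)] at h2
  have hcong : ∀ i ∈ Finset.range c,
      (compFinset (n + 1 - (i+1)) (c+1)).card = (compFinset (n - i) (c+1)).card := by
    intro i _; congr 2; omega
  rw [Finset.sum_range_succ', Finset.sum_congr rfl hcong] at h1
  rw [Finset.sum_range_succ] at h2
  simp only [Nat.sub_zero] at h1
  rw [show n+1+1 = n+2 from rfl] at h1
  rw [show n + 1 - (c + 1) = n - c by omega]
  omega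

lemma G_small (b m : ℕ) (h : m + 1 ≤ b) : (compFinset (m+1) b).card = 2 ^ m := by
  induction m with
  | zero =>
    have h1 := card_compFinset_succ 0 b
    rw [min_eq_left (by omega)] at h1
    simpa [card_compFinset_zero] using h1
  | succ m ih =>
    rw [rec_small m b h, ih (by omega)]
    ring

lemma G_mid (b d : ℕ) (hb : 1 ≤ b) (hd : d ≤ b) :
    2 * ((compFinset (b+1+d) b).card : ℚ) = 2^(b+d+1) - (d+2) * 2^d := by
  induction d with
  | zero =>
    obtain ⟨c, rfl⟩ : ∃ c, b = c + 1 := ⟨b - 1, by omega⟩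
    have h1 := rec_large c (c+1) hb (by omega)
    rw [show c + 1 - (c+1) = 0 by omega, card_compFinset_zero,
      G_small (c+1) c (by omega)] at h1
    have hc : ((compFinset (c+2) (c+1)).card : ℚ) + 1 = 2 * 2^c := by
      exact_mod_cast congrArg (Nat.cast (R := ℚ)) h1
    rw [show c + 1 + 1 + 0 = c + 2 by ring]
    push_cast
    linear_combination 2 * hc
  | succ d ih =>
    have h1 := rec_large (b + d) b hb (by omega)
    have h2 : b + d + 1 - b = d + 1 := by omega
    rw [h2, G_small b d (by omega)] at h1
    have hcast : ((compFinset (b+d+2) b).card : ℚ) + 2^d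
        = 2 * ((compFinset (b+d+1) b).card : ℚ) := by
      exact_mod_cast congrArg (Nat.cast (R := ℚ)) h1
    have ih' := ih (by omega)
    rw [show b + 1 + d = b + d + 1 by ring] at ih'
    rw [show b + 1 + (d+1) = b + d + 2 by ring]
    push_cast
    linear_combination 2 * hcast + 2 * ih'

lemma G_big (b e : ℕ) (hb : 1 ≤ b) (he : e ≤ b + 1) :
    16 * ((compFinset (2*b+1+e) b).card : ℚ)
      = 2^(2*b+e+4) - (b+e+2)*2^(b+e+3) + e*(e+3)*2^(e+1) := by
  induction e with
  | zero =>
    have h := G_mid b b hb le_rfl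
    rw [show b + 1 + b = 2*b+1+0 by ring] at h
    have : (16 : ℚ) * ((compFinset (2*b+1+0) b).card : ℚ)
        = 8 * (2 * ((compFinset (2*b+1+0) b).card : ℚ)) := by ring
    rw [this, h]
    push_cast
    ring
  | succ e ih =>
    have h1 := rec_large (2*b + e) b hb (by omega)
    have h2 : 2*b + e + 1 - b = b + e + 1 := by omega
    rw [h2] at h1
    have hmid := G_mid b e hb (by omega)
    rw [show b + 1 + e = b + e + 1 by ring] at hmid
    have hcast : ((compFinset (2*b+e+2) b).card : ℚ) + ((compFinset (b+e+1) b).card : ℚ)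
        = 2 * ((compFinset (2*b+e+1) b).card : ℚ) := by
      exact_mod_cast congrArg (Nat.cast (R := ℚ)) h1
    have ih' := ih (by omega)
    rw [show 2*b+1+e = 2*b+e+1 by ring] at ih'
    rw [show 2*b+1+(e+1) = 2*b+e+2 by ring]
    push_cast
    linear_combination 16 * hcast + 2 * ih' - 8 * hmid

/-- B_{2k+j,k}: compositions of `2k + j` whose maximum part equals `k`, `0 < j < k`. -/
theorem stmt_4 (j k : ℕ) (hj : 0 < j) (hjk : j < k) :
    (Nat.card {l : List ℕ // l.sum = 2 * k + j ∧ (∀ x ∈ l, 0 < x) ∧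
        k ∈ l ∧ ∀ x ∈ l, x ≤ k} : ℚ)
      = ((k : ℚ) + j + 3) * 2 ^ ((k : ℤ) + j - 2)
        - (3 * (j : ℚ) ^ 2 + 19 * j + 18) * 2 ^ ((j : ℤ) - 4) := by
  obtain ⟨i, rfl⟩ : ∃ i, j = i + 1 := ⟨j - 1, by omega⟩
  obtain ⟨c, rfl⟩ : ∃ c, k = c + 1 := ⟨k - 1, by omega⟩
  have hc : 1 ≤ c := by omega
  have hset : {l : List ℕ | l.sum = 2 * (c+1) + (i+1) ∧ (∀ x ∈ l, 0 < x) ∧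
        (c+1) ∈ l ∧ ∀ x ∈ l, x ≤ c+1}
      = ↑((compFinset (2 * (c+1) + (i+1)) (c+1)).filter (fun l => (c+1) ∈ l)) := by
    ext l
    simp only [Set.mem_setOf_eq, Finset.coe_filter, mem_compFinset]
    constructor
    · rintro ⟨h1, h2, h3, h4⟩
      exact ⟨⟨h1, fun x hx => ⟨h2 x hx, h4 x hx⟩⟩, h3⟩
    · rintro ⟨⟨h1, h2⟩, h3⟩
      exact ⟨h1, fun x hx => (h2 x hx).1, h3, fun x hx => (h2 x hx).2⟩
  have hcard : Nat.card {l : List ℕ // l.sum = 2 * (c+1) + (i+1) ∧ (∀ x ∈ l, 0 < x) ∧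
        (c+1) ∈ l ∧ ∀ x ∈ l, x ≤ c+1}
      = ((compFinset (2 * (c+1) + (i+1)) (c+1)).filter (fun l => (c+1) ∈ l)).card := by
    rw [← Set.ncard_coe_finset, ← hset]
    exact Nat.card_coe_set_eq _
  have hfn : (compFinset (2 * (c+1) + (i+1)) (c+1)).filter (fun l => ¬ (c+1) ∈ l)
      = compFinset (2 * (c+1) + (i+1)) c := by
    ext l
    simp only [Finset.mem_filter, mem_compFinset]
    constructor
    · rintro ⟨⟨h1, h2⟩, h3⟩
      refine ⟨h1, fun x hx => ⟨(h2 x hx).1, ?_⟩⟩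
      have hb := (h2 x hx).2
      have hne : x ≠ c + 1 := fun h => h3 (h ▸ hx)
      omega
    · rintro ⟨h1, h2⟩
      refine ⟨⟨h1, fun x hx => ⟨(h2 x hx).1, by have := (h2 x hx).2; omega⟩⟩, ?_⟩
      intro hmem
      have := (h2 (c+1) hmem).2
      omega
  classical
  have hsplit := Finset.card_filter_add_card_filter_not
    (s := compFinset (2 * (c+1) + (i+1)) (c+1)) (fun l => (c+1) ∈ l)
  rw [hfn] at hsplit
  have hG1 := G_big (c+1) i (by omega) (by omega)
  rw [show 2*(c+1)+1+i = 2 * (c+1) + (i+1) by ring] at hG1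
  have hG2 := G_big c (i+2) hc (by omega)
  rw [show 2*c+1+(i+2) = 2 * (c+1) + (i+1) by ring] at hG2
  have hsplitQ : (((compFinset (2 * (c+1) + (i+1)) (c+1)).filter
        (fun l => (c+1) ∈ l)).card : ℚ)
      + ((compFinset (2 * (c+1) + (i+1)) c).card : ℚ)
      = ((compFinset (2 * (c+1) + (i+1)) (c+1)).card : ℚ) := by
    exact_mod_cast congrArg (Nat.cast (R := ℚ)) hsplit
  rw [hcard]
  rw [show ((c+1 : ℕ) : ℤ) + ((i+1 : ℕ) : ℤ) - 2 = ((c + i : ℕ) : ℤ) by push_cast; ring,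
    zpow_natCast]
  have hzp : (2 : ℚ) ^ (((i+1 : ℕ) : ℤ) - 4) = 2 ^ (i+1) / 16 := by
    rw [zpow_sub₀ (by norm_num : (2:ℚ) ≠ 0), zpow_natCast]
    norm_num
  rw [hzp]
  push_cast at hG1 hG2 hsplitQ ⊢
  linear_combination hsplitQ + (1/16) * hG1 - (1/16) * hG2
end

section
/- For positive integers i < j < k, the number of compositions of 2k + j that contain at least one part equal to k and at least one part equal to k + i equals the sum over ℓ from 1 to j - i of (ℓ² + 3ℓ + 2) * C(j - i - 1, ℓ - 1). -/
open Finset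

namespace Stmt5Aux

/-- compositions of `n` with exactly `ℓ` parts, as a finset of lists -/
def compsL : ℕ → ℕ → Finset (List ℕ)
  | n, 0 => if n = 0 then {[]} else ∅
  | n, ℓ + 1 => (Finset.Icc 1 n).biUnion fun a => (compsL (n - a) ℓ).image (a :: ·)

lemma mem_compsL : ∀ (ℓ n : ℕ) (l : List ℕ),
    l ∈ compsL n ℓ ↔ l.sum = n ∧ (∀ x ∈ l, 0 < x) ∧ l.length = ℓ := by
  intro ℓ
  induction ℓ with
  | zero =>
    intro n l
    by_cases hn : n = 0
    · subst hn
      constructor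
      · intro h
        have hl : l = [] := by simpa [compsL] using h
        subst hl; exact ⟨rfl, by simp, rfl⟩
      · rintro ⟨h1, h2, h3⟩
        have hl : l = [] := List.length_eq_zero_iff.mp h3
        subst hl; simp [compsL]
    · constructor
      · intro h; simp [compsL, hn] at h
      · rintro ⟨h1, h2, h3⟩
        have hl : l = [] := List.length_eq_zero_iff.mp h3
        subst hl; simp at h1; exact absurd h1.symm hn
  | succ ℓ IH =>
    intro n l
    simp only [compsL, Finset.mem_biUnion, Finset.mem_image, Finset.mem_Icc]
    constructor
    · rintro ⟨a, ⟨ha1, ha2⟩, t, ht, rfl⟩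
      obtain ⟨hs, hp, hl⟩ := (IH _ t).mp ht
      refine ⟨by rw [List.sum_cons, hs]; omega, ?_, by simp [hl]⟩
      intro x hx
      rcases List.mem_cons.mp hx with rfl | hx
      · exact ha1
      · exact hp x hx
    · rintro ⟨hs, hp, hl⟩
      cases l with
      | nil => simp at hl
      | cons a t =>
        have ha : 0 < a := hp a (by simp)
        have hs' : a + t.sum = n := by simpa using hs
        refine ⟨a, ⟨ha, by omega⟩, t,
          (IH _ t).mpr ⟨by omega, fun x hx => hp x (List.mem_cons_of_mem _ hx), by simpa using hl⟩,
          rfl⟩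

lemma compsL_zero_card (n : ℕ) : (compsL n 0).card = if n = 0 then 1 else 0 := by
  by_cases hn : n = 0 <;> simp [compsL, hn]

lemma compsL_zero_left (ℓ : ℕ) : compsL 0 (ℓ + 1) = ∅ := by
  simp [compsL]

lemma card_compsL_succ (n ℓ : ℕ) :
    (compsL n (ℓ + 1)).card = ∑ a ∈ Finset.Icc 1 n, (compsL (n - a) ℓ).card := by
  show ((Finset.Icc 1 n).biUnion fun a => (compsL (n - a) ℓ).image (a :: ·)).card = _
  rw [Finset.card_biUnion]
  · exact Finset.sum_congr rfl fun a _ =>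
      Finset.card_image_of_injective _ (List.cons_injective)
  · intro x _ y _ hxy
    rw [Function.onFun, Finset.disjoint_left]
    intro l h1 h2
    obtain ⟨t, _, rfl⟩ := Finset.mem_image.mp h1
    obtain ⟨t', _, h⟩ := Finset.mem_image.mp h2
    exact hxy (by injection h.symm)

lemma compsL_card (ℓ : ℕ) : ∀ n, 1 ≤ n → (compsL n (ℓ + 1)).card = Nat.choose (n - 1) ℓ := by
  induction ℓ with
  | zero =>
    intro n hn
    rw [card_compsL_succ]
    rw [Finset.sum_eq_single_of_mem n (Finset.mem_Icc.mpr ⟨hn, le_refl n⟩)]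
    · rw [compsL_zero_card, if_pos (by omega)]
      simp
    · intro a ha hne
      rw [compsL_zero_card, if_neg]
      simp only [Finset.mem_Icc] at ha
      omega
  | succ ℓ IH =>
    intro n hn
    obtain ⟨n', rfl⟩ : ∃ n', n = n' + 1 := ⟨n - 1, by omega⟩
    rw [card_compsL_succ]
    rw [Finset.sum_Icc_succ_top (by omega : 1 ≤ n' + 1)]
    rw [show n' + 1 - (n' + 1) = 0 by omega, compsL_zero_left, Finset.card_empty, add_zero]
    have hcongr : ∀ a ∈ Finset.Icc 1 n', (compsL (n' + 1 - a) (ℓ + 1)).card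
        = Nat.choose (n' - a) ℓ := by
      intro a ha
      simp only [Finset.mem_Icc] at ha
      rw [IH _ (by omega)]
      congr 1
      omega
    rw [Finset.sum_congr rfl hcongr]
    have hre : ∑ a ∈ Finset.Icc 1 n', Nat.choose (n' - a) ℓ
        = ∑ s ∈ Finset.range n', Nat.choose s ℓ := by
      refine Finset.sum_nbij' (fun a => n' - a) (fun s => n' - s) ?_ ?_ ?_ ?_ ?_
      · intro a ha; simp only [Finset.mem_Icc] at ha; simp only [Finset.mem_range]; omega
      · intro s hs; simp only [Finset.mem_range] at hs; simp only [Finset.mem_Icc]; omega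
      · intro a ha; simp only [Finset.mem_Icc] at ha; show n' - (n' - a) = a; omega
      · intro s hs; simp only [Finset.mem_range] at hs; show n' - (n' - s) = s; omega
      · intro a _; rfl
    rw [hre]
    rcases Nat.eq_zero_or_pos n' with rfl | hn'
    · simp
    · have hsub : ∑ s ∈ Finset.range n', Nat.choose s ℓ
          = ∑ s ∈ Finset.Icc ℓ (n' - 1), Nat.choose s ℓ := by
        refine (Finset.sum_subset ?_ ?_).symm
        · intro s hs; simp only [Finset.mem_Icc] at hs; simp only [Finset.mem_range]; omega
        · intro s hs hs'
          simp only [Finset.mem_range] at hs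
          simp only [Finset.mem_Icc] at hs'
          exact Nat.choose_eq_zero_of_lt (by omega)
      rw [hsub, Nat.sum_Icc_choose]
      congr 1
      omega

/-- all compositions of `n` -/
def compsF (n : ℕ) : Finset (List ℕ) := (Finset.range (n + 1)).biUnion (compsL n)

lemma mem_compsF (n : ℕ) (l : List ℕ) :
    l ∈ compsF n ↔ l.sum = n ∧ ∀ x ∈ l, 0 < x := by
  simp only [compsF, Finset.mem_biUnion, Finset.mem_range, mem_compsL]
  constructor
  · rintro ⟨ℓ, _, hs, hp, _⟩; exact ⟨hs, hp⟩
  · rintro ⟨hs, hp⟩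
    refine ⟨l.length, ?_, hs, hp, rfl⟩
    have := List.length_le_sum_of_one_le l hp
    omega

lemma perm_insertIdx (b : ℕ) : ∀ (p : ℕ) (t : List ℕ), p ≤ t.length →
    List.Perm (t.insertIdx p b) (b :: t)
  | 0, t, _ => by simp [List.insertIdx_zero]
  | p + 1, [], h => by simp at h
  | p + 1, x :: t, h => by
    rw [List.insertIdx_succ_cons]
    exact ((perm_insertIdx b p t (by simpa using h)).cons x).trans (List.Perm.swap b x t)

lemma indexOf_insertIdx (b : ℕ) : ∀ (p : ℕ) (t : List ℕ), b ∉ t → p ≤ t.length →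
    (t.insertIdx p b).idxOf b = p
  | 0, t, _, _ => by simp [List.insertIdx_zero]
  | p + 1, [], _, h => by simp at h
  | p + 1, x :: t, hb, h => by
    have hxb : x ≠ b := fun h' => hb (h' ▸ List.mem_cons_self (a := x) (l := t))
    rw [List.insertIdx_succ_cons, List.idxOf_cons_ne _ hxb,
      indexOf_insertIdx b p t (fun h' => hb (List.mem_cons_of_mem _ h')) (by simpa using h)]

lemma erase_insertIdx (b : ℕ) : ∀ (p : ℕ) (t : List ℕ), b ∉ t → p ≤ t.length →
    (t.insertIdx p b).erase b = t
  | 0, t, _, _ => by simp [List.insertIdx_zero]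
  | p + 1, [], _, h => by simp at h
  | p + 1, x :: t, hb, h => by
    have hxb : x ≠ b := fun h' => hb (h' ▸ List.mem_cons_self (a := x) (l := t))
    rw [List.insertIdx_succ_cons, List.erase_cons_tail (by simp [hxb]),
      erase_insertIdx b p t (fun h' => hb (List.mem_cons_of_mem _ h')) (by simpa using h)]

lemma insertIdx_indexOf_erase (b : ℕ) (l : List ℕ) (hl : b ∈ l) :
    (l.erase b).insertIdx (l.idxOf b) b = l := by
  induction l with
  | nil => simp at hl
  | cons x t IH =>
    by_cases hx : x = b
    · subst hx
      simp [List.idxOf_cons_self, List.insertIdx_zero]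
    · have hbt : b ∈ t := by
        rcases List.mem_cons.mp hl with h | h
        · exact absurd h.symm hx
        · exact h
      rw [List.idxOf_cons_ne _ hx, List.erase_cons_tail (by simp [hx]),
        Nat.succ_eq_add_one, List.insertIdx_succ_cons, IH hbt]

lemma insert_count (b : ℕ) (F G : Finset (List ℕ)) (hb : ∀ t ∈ F, b ∉ t)
    (hG : ∀ l, l ∈ G ↔ b ∈ l ∧ l.erase b ∈ F) (g : ℕ → ℕ) :
    ∑ l ∈ G, g l.length = ∑ t ∈ F, (t.length + 1) * g (t.length + 1) := by
  have hc : ∀ t ∈ F, (t.length + 1) * g (t.length + 1)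
      = ∑ _p ∈ Finset.range (t.length + 1), g (t.length + 1) := by
    intro t _
    rw [Finset.sum_const, Finset.card_range, smul_eq_mul]
  rw [Finset.sum_congr rfl hc, Finset.sum_sigma']
  refine Finset.sum_nbij' (fun l => (⟨l.erase b, l.idxOf b⟩ : Σ _ : List ℕ, ℕ))
    (fun x => x.1.insertIdx x.2 b) ?_ ?_ ?_ ?_ ?_
  · intro l hl
    obtain ⟨hbl, hF⟩ := (hG l).mp hl
    refine Finset.mem_sigma.mpr ⟨hF, Finset.mem_range.mpr ?_⟩
    have h1 : (l.erase b).length + 1 = l.length := List.length_erase_add_one hbl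
    have h2 : l.idxOf b < l.length := List.idxOf_lt_length_iff.mpr hbl
    show l.idxOf b < (l.erase b).length + 1
    omega
  · rintro ⟨t, p⟩ hx
    obtain ⟨ht, hp⟩ := Finset.mem_sigma.mp hx
    have hp' : p ≤ t.length := by simpa [Nat.lt_succ_iff] using Finset.mem_range.mp hp
    refine (hG _).mpr ⟨?_, ?_⟩
    · exact ((perm_insertIdx b p t hp').mem_iff).mpr (List.mem_cons_self (a := b) (l := t))
    · rw [erase_insertIdx b p t (hb t ht) hp']
      exact ht
  · intro l hl
    exact insertIdx_indexOf_erase b l ((hG l).mp hl).1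
  · rintro ⟨t, p⟩ hx
    obtain ⟨ht, hp⟩ := Finset.mem_sigma.mp hx
    have hp' : p ≤ t.length := by simpa [Nat.lt_succ_iff] using Finset.mem_range.mp hp
    have h1 := erase_insertIdx b p t (hb t ht) hp'
    have h2 := indexOf_insertIdx b p t (hb t ht) hp'
    simp only [h1, h2]
  · intro l hl
    have hbl := ((hG l).mp hl).1
    have h1 : (l.erase b).length + 1 = l.length := List.length_erase_add_one hbl
    show g l.length = g ((l.erase b).length + 1)
    rw [h1]

end Stmt5Aux

open Stmt5Aux in
/-- Compositions of `2k + j` containing a part equal to `k` and a part equal to `k + i`. -/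
theorem stmt_5 (i j k : ℕ) (hi : 0 < i) (hij : i < j) (hjk : j < k) :
    Nat.card {l : List ℕ // l.sum = 2 * k + j ∧ (∀ x ∈ l, 0 < x) ∧
        k ∈ l ∧ (k + i) ∈ l}
      = ∑ ℓ ∈ Finset.Icc 1 (j - i), (ℓ ^ 2 + 3 * ℓ + 2) * Nat.choose (j - i - 1) (ℓ - 1) := by
  set m := j - i with hm
  have hm1 : 1 ≤ m := by omega
  set G0 := (compsF (k + m)).filter (fun l => k ∈ l) with hG0def
  set G1 := (compsF (2 * k + j)).filter (fun l => k ∈ l ∧ (k + i) ∈ l) with hG1def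
  have hcard : Nat.card {l : List ℕ // l.sum = 2 * k + j ∧ (∀ x ∈ l, 0 < x) ∧
      k ∈ l ∧ (k + i) ∈ l} = G1.card := by
    have e : ∀ l : List ℕ,
        (l.sum = 2 * k + j ∧ (∀ x ∈ l, 0 < x) ∧ k ∈ l ∧ (k + i) ∈ l) ↔ l ∈ G1 := by
      intro l
      rw [hG1def, Finset.mem_filter, mem_compsF]
      tauto
    rw [Nat.card_congr (Equiv.subtypeEquivRight e)]
    exact Nat.card_eq_finsetCard G1
  have hb0 : ∀ t ∈ compsF m, k ∉ t := by
    intro t ht hk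
    obtain ⟨hs, hp⟩ := (mem_compsF m t).mp ht
    have := List.single_le_sum (l := t) (fun x _ => Nat.zero_le x) k hk
    omega
  have hG0mem : ∀ l, l ∈ G0 ↔ k ∈ l ∧ l.erase k ∈ compsF m := by
    intro l
    rw [hG0def, Finset.mem_filter, mem_compsF, mem_compsF]
    constructor
    · rintro ⟨⟨hs, hp⟩, hk⟩
      have perm := List.perm_cons_erase hk
      have hsum := perm.sum_eq
      rw [List.sum_cons] at hsum
      exact ⟨hk, by omega, fun x hx => hp x (List.mem_of_mem_erase hx)⟩
    · rintro ⟨hk, hs', hp'⟩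
      have perm := List.perm_cons_erase hk
      have hsum := perm.sum_eq
      rw [List.sum_cons] at hsum
      refine ⟨⟨by omega, ?_⟩, hk⟩
      intro x hx
      rcases List.mem_cons.mp (perm.mem_iff.mp hx) with rfl | hx'
      · omega
      · exact hp' x hx'
  have hb1 : ∀ t ∈ G0, (k + i) ∉ t := by
    intro t ht hki
    obtain ⟨hk, hF⟩ := (hG0mem t).mp ht
    obtain ⟨hs', hp'⟩ := (mem_compsF m _).mp hF
    have hki' : (k + i) ∈ t.erase k := (List.mem_erase_of_ne (by omega)).mpr hki
    have := List.single_le_sum (l := t.erase k) (fun x _ => Nat.zero_le x) _ hki'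
    omega
  have hG1mem : ∀ l, l ∈ G1 ↔ (k + i) ∈ l ∧ l.erase (k + i) ∈ G0 := by
    intro l
    rw [hG1def, Finset.mem_filter, mem_compsF, hG0def, Finset.mem_filter, mem_compsF]
    constructor
    · rintro ⟨⟨hs, hp⟩, hk, hki⟩
      have perm := List.perm_cons_erase hki
      have hsum := perm.sum_eq
      rw [List.sum_cons] at hsum
      refine ⟨hki, ⟨by omega, fun x hx => hp x (List.mem_of_mem_erase hx)⟩,
        (List.mem_erase_of_ne (by omega)).mpr hk⟩
    · rintro ⟨hki, ⟨hs', hp'⟩, hk'⟩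
      have perm := List.perm_cons_erase hki
      have hsum := perm.sum_eq
      rw [List.sum_cons] at hsum
      refine ⟨⟨by omega, ?_⟩, List.mem_of_mem_erase hk', hki⟩
      intro x hx
      rcases List.mem_cons.mp (perm.mem_iff.mp hx) with rfl | hx'
      · omega
      · exact hp' x hx'
  have step1 : G1.card = ∑ t ∈ G0, (t.length + 1) := by
    rw [Finset.card_eq_sum_ones]
    rw [insert_count (k + i) G0 G1 hb1 hG1mem (fun _ => 1)]
    simp
  have step2 : ∑ t ∈ G0, (t.length + 1)
      = ∑ t ∈ compsF m, (t.length + 1) * (t.length + 2) := by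
    exact insert_count k (compsF m) G0 hb0 hG0mem (fun n => n + 1)
  rw [hcard, step1, step2]
  have hsplit : ∑ t ∈ compsF m, (t.length + 1) * (t.length + 2)
      = ∑ ℓ ∈ Finset.range (m + 1), ∑ t ∈ compsL m ℓ, (t.length + 1) * (t.length + 2) := by
    rw [compsF, Finset.sum_biUnion]
    intro x _ y _ hxy
    rw [Function.onFun, Finset.disjoint_left]
    intro l h1 h2
    exact hxy (by rw [← ((mem_compsL x m l).mp h1).2.2, ((mem_compsL y m l).mp h2).2.2])
  rw [hsplit]
  have hinner : ∀ ℓ ∈ Finset.range (m + 1),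
      ∑ t ∈ compsL m ℓ, (t.length + 1) * (t.length + 2)
        = (compsL m ℓ).card * ((ℓ + 1) * (ℓ + 2)) := by
    intro ℓ _
    rw [Finset.sum_congr rfl (fun t ht => by
      rw [((mem_compsL ℓ m t).mp ht).2.2]), Finset.sum_const, smul_eq_mul]
  rw [Finset.sum_congr rfl hinner]
  have hzero : ∑ ℓ ∈ Finset.range (m + 1), (compsL m ℓ).card * ((ℓ + 1) * (ℓ + 2))
      = ∑ ℓ ∈ Finset.Icc 1 m, (compsL m ℓ).card * ((ℓ + 1) * (ℓ + 2)) := by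
    refine (Finset.sum_subset ?_ ?_).symm
    · intro ℓ hℓ; simp only [Finset.mem_Icc] at hℓ; simp only [Finset.mem_range]; omega
    · intro ℓ hℓ hℓ'
      simp only [Finset.mem_range] at hℓ
      simp only [Finset.mem_Icc] at hℓ'
      have : ℓ = 0 := by omega
      subst this
      rw [compsL_zero_card, if_neg (by omega)]
      ring
  rw [hzero]
  refine Finset.sum_congr rfl ?_
  intro ℓ hℓ
  simp only [Finset.mem_Icc] at hℓ
  obtain ⟨ℓ', rfl⟩ : ∃ ℓ', ℓ = ℓ' + 1 := ⟨ℓ - 1, by omega⟩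
  rw [compsL_card ℓ' m hm1]
  simp only [Nat.add_sub_cancel]
  ring
end

section
/- For positive integers j < k, the number of compositions of 2k + j having at least two parts equal to k is the sum over ℓ from 1 to j of ((ℓ² + 3ℓ + 2)/2) * C(j - 1, ℓ - 1). -/
open Finset

namespace Stmt6

def compsL : ℕ → ℕ → Finset (List ℕ)
  | n, 0 => if n = 0 then {[]} else ∅
  | n, (ℓ+1) => (Icc 1 n).biUnion fun i => (compsL (n - i) ℓ).image (i :: ·)

lemma mem_compsL : ∀ (ℓ n : ℕ) (l : List ℕ),
    l ∈ compsL n ℓ ↔ l.sum = n ∧ (∀ x ∈ l, 0 < x) ∧ l.length = ℓ := by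
  intro ℓ
  induction ℓ with
  | zero =>
    intro n l
    simp only [compsL]
    constructor
    · intro h
      split at h
      · simp_all
      · simp at h
    · rintro ⟨hs, _, hl⟩
      rw [List.length_eq_zero_iff] at hl
      subst hl
      simp at hs
      simp [hs]
  | succ ℓ ih =>
    intro n l
    simp only [compsL, mem_biUnion, mem_image, mem_Icc]
    constructor
    · rintro ⟨i, ⟨hi1, hin⟩, t, ht, rfl⟩
      rw [ih] at ht
      obtain ⟨hs, hp, hl⟩ := ht
      refine ⟨by simp [hs]; omega, ?_, by simp [hl]⟩
      intro x hx
      rcases List.mem_cons.1 hx with rfl | hx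
      · omega
      · exact hp x hx
    · rintro ⟨hs, hp, hl⟩
      match l with
      | x :: t =>
        refine ⟨x, ⟨hp x (by simp), ?_⟩, t, ?_, rfl⟩
        · simp at hs; omega
        · rw [ih]
          simp at hs hl
          refine ⟨by omega, fun y hy => hp y (by simp [hy]), hl⟩

lemma sum_range_choose' (n ℓ : ℕ) : ∑ m ∈ range n, m.choose ℓ = n.choose (ℓ+1) := by
  induction n with
  | zero => simp
  | succ n ih => rw [Finset.sum_range_succ, ih, Nat.choose_succ_succ' (n) (ℓ)]; omega

lemma compsL_zero_succ (ℓ : ℕ) : compsL 0 (ℓ+1) = ∅ := by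
  ext l
  rw [mem_compsL]
  simp only [Finset.notMem_empty, iff_false]
  rintro ⟨hs, hp, hl⟩
  match l with
  | x :: t =>
    have := hp x (by simp)
    simp at hs
    omega

lemma card_compsL_succ (ℓ n : ℕ) (ih : ∀ m, (compsL (m+1) (ℓ+1)).card = m.choose ℓ) :
    (compsL (n+1) (ℓ+1+1)).card = n.choose (ℓ+1) := by
  rw [show compsL (n+1) (ℓ+1+1) = (Icc 1 (n+1)).biUnion fun i => (compsL (n+1-i) (ℓ+1)).image (i :: ·) from rfl]
  rw [Finset.card_biUnion]
  · have h1 : ∀ i, ((compsL (n+1-i) (ℓ+1)).image (i :: ·)).card = (compsL (n+1-i) (ℓ+1)).card :=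
      fun i => Finset.card_image_of_injective _ (fun a b h => by simpa using h)
    simp only [h1]
    have hIcc : Icc 1 (n+1) = (range (n+1)).image (·+1) := by
      ext x
      simp only [mem_Icc, Finset.mem_image, mem_range]
      constructor
      · rintro ⟨h1, h2⟩; exact ⟨x-1, by omega, by omega⟩
      · rintro ⟨a, ha, rfl⟩; omega
    rw [hIcc, Finset.sum_image (by intros a _ b _ h; dsimp only at h; omega)]
    rw [← Finset.sum_range_reflect]
    have h2 : ∀ i ∈ range (n+1), (compsL (n+1-((n+1-1-i)+1)) (ℓ+1)).card = (compsL i (ℓ+1)).card := by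
      intro i hi
      simp at hi
      congr 2
      omega
    rw [Finset.sum_congr rfl h2, Finset.sum_range_succ']
    simp only [compsL_zero_succ, Finset.card_empty, add_zero]
    simp only [ih]
    exact sum_range_choose' n (ℓ)
  · intro a _ b _ hab
    simp only [Finset.disjoint_left, Finset.mem_image]
    rintro l ⟨t, _, rfl⟩ ⟨t', _, h⟩
    exact hab (by simpa using (List.cons_eq_cons.1 h).1.symm)


lemma length_le_sum (l : List ℕ) (hp : ∀ x ∈ l, 0 < x) : l.length ≤ l.sum := by
  induction l with
  | nil => simp
  | cons x t ih =>
    simp only [List.length_cons, List.sum_cons]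
    have := hp x (by simp)
    have := ih (fun y hy => hp y (by simp [hy]))
    omega

def pairs (ℓ : ℕ) : Finset (ℕ × ℕ) := (range (ℓ+1)).biUnion fun i' => (Iic i').image (fun i => (i, i'))

lemma mem_pairs (ℓ : ℕ) (p : ℕ × ℕ) : p ∈ pairs ℓ ↔ p.1 ≤ p.2 ∧ p.2 ≤ ℓ := by
  obtain ⟨i, i'⟩ := p
  simp only [pairs, mem_biUnion, mem_range, Finset.mem_image, mem_Iic]
  constructor
  · rintro ⟨a, ha, b, hb, h⟩
    cases h
    exact ⟨hb, by omega⟩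
  · rintro ⟨h1, h2⟩
    exact ⟨i', by omega, i, h1, rfl⟩

lemma card_pairs (ℓ : ℕ) : (pairs ℓ).card = (ℓ^2 + 3*ℓ + 2)/2 := by
  have h : (pairs ℓ).card * 2 = ℓ^2 + 3*ℓ + 2 := by
    rw [pairs, Finset.card_biUnion]
    · have h1 : ∀ i' ∈ range (ℓ+1), ((Iic i').image (fun i => (i, i'))).card = i' + 1 := by
        intro i' _
        rw [Finset.card_image_of_injective _ (fun a b h => by simpa using h)]
        simp
      rw [Finset.sum_congr rfl h1]
      have hg := Finset.sum_range_id_mul_two (ℓ+1)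
      have he : (ℓ+1) * (ℓ+1-1) = ℓ^2 + ℓ := by simp; ring
      simp only [Finset.sum_add_distrib, Finset.sum_const, card_range, smul_eq_mul, mul_one] at *
      omega
    · intro a _ b _ hab
      simp only [Finset.disjoint_left, Finset.mem_image]
      rintro p ⟨x, _, rfl⟩ ⟨y, _, h⟩
      exact hab (by simpa using (Prod.ext_iff.1 h).2.symm)
  omega

/-- first-occurrence split -/
lemma split_one {k : ℕ} {l : List ℕ} (h : k ∈ l) : ∃ a t, l = a ++ k :: t ∧ k ∉ a := by
  induction l with
  | nil => simp at h
  | cons x t ih =>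
    by_cases hx : x = k
    · exact ⟨[], t, by simp [hx], by simp⟩
    · have : k ∈ t := by rcases List.mem_cons.1 h with h' | h'; exact absurd h'.symm hx; exact h'
      obtain ⟨a, s, rfl, ha⟩ := ih this
      exact ⟨x :: a, s, by simp, by
        intro hm
        rcases List.mem_cons.1 hm with h' | h'
        · exact hx h'.symm
        · exact ha h'⟩

lemma split_two {k : ℕ} {l : List ℕ} (h : 2 ≤ l.count k) :
    ∃ a b c, l = a ++ k :: (b ++ k :: c) ∧ k ∉ a ∧ k ∉ b := by
  have hk : k ∈ l := List.count_pos_iff.1 (by omega)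
  obtain ⟨a, t, rfl, ha⟩ := split_one hk
  have : k ∈ t := by
    have hc := h
    rw [List.count_append, List.count_cons_self] at hc
    have : (List.count k a) = 0 := List.count_eq_zero.2 ha
    exact List.count_pos_iff.1 (by omega)
  obtain ⟨b, c, rfl, hb⟩ := split_one this
  exact ⟨a, b, c, rfl, ha, hb⟩

lemma split_unique {k : ℕ} : ∀ {a b : List ℕ} {s t : List ℕ}, k ∉ a → k ∉ b →
    a ++ k :: s = b ++ k :: t → a = b ∧ s = t := by
  intro a
  induction a with
  | nil =>
    rintro b s t _ hb h
    match b with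
    | [] => simpa using h
    | x :: b' =>
      simp only [List.nil_append, List.cons_append, List.cons_eq_cons] at h
      exact absurd h.1 (by simp at hb; tauto)
  | cons x a' ih =>
    rintro b s t ha hb h
    match b with
    | [] =>
      simp only [List.cons_append, List.nil_append, List.cons_eq_cons] at h
      exact absurd h.1.symm (by simp at ha; tauto)
    | y :: b' =>
      simp only [List.cons_append, List.cons_eq_cons] at h
      obtain ⟨rfl, h2⟩ := h
      have := ih (by simp at ha; tauto) (by simp at hb; tauto) h2
      exact ⟨by rw [this.1], this.2⟩


lemma card_compsL : ∀ (ℓ n : ℕ), (compsL (n+1) (ℓ+1)).card = n.choose ℓ := by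
  intro ℓ
  induction ℓ with
  | zero =>
    intro n
    rw [show (compsL (n+1) 1) = {[n+1]} from ?_]
    · simp
    · ext l
      rw [mem_compsL]
      simp only [Finset.mem_singleton]
      constructor
      · rintro ⟨hs, hp, hl⟩
        match l with
        | [x] => simp at hs; simp [hs]
      · rintro rfl; simp
  | succ ℓ ih => exact fun n => card_compsL_succ ℓ n ih

lemma card_compsL' (ℓ n : ℕ) (hn : 0 < n) (hl : 0 < ℓ) :
    (compsL n ℓ).card = (n-1).choose (ℓ-1) := by
  obtain ⟨n, rfl⟩ : ∃ m, n = m + 1 := ⟨n-1, by omega⟩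
  obtain ⟨ℓ, rfl⟩ : ∃ m, ℓ = m + 1 := ⟨ℓ-1, by omega⟩
  simpa using card_compsL ℓ n

def G (j : ℕ) : Finset (List ℕ × ℕ × ℕ) := (Icc 1 j).biUnion fun ℓ => (compsL j ℓ) ×ˢ pairs ℓ

lemma mem_G {j : ℕ} (hj : 0 < j) (x : List ℕ × ℕ × ℕ) :
    x ∈ G j ↔ x.1.sum = j ∧ (∀ y ∈ x.1, 0 < y) ∧ x.2.1 ≤ x.2.2 ∧ x.2.2 ≤ x.1.length := by
  obtain ⟨l, i, i'⟩ := x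
  simp only [G, mem_biUnion, Finset.mem_product, mem_Icc, mem_compsL, mem_pairs]
  constructor
  · rintro ⟨ℓ, ⟨h1, h2⟩, ⟨hs, hp, hlen⟩, hp1, hp2⟩
    exact ⟨hs, hp, hp1, by omega⟩
  · rintro ⟨hs, hp, hp1, hp2⟩
    refine ⟨l.length, ⟨?_, ?_⟩, ⟨hs, hp, rfl⟩, hp1, hp2⟩
    · rcases l with _ | ⟨y, t⟩
      · simp at hs; omega
      · simp
    · calc l.length ≤ l.sum := length_le_sum l hp
        _ = j := hs

lemma card_G {j : ℕ} (hj : 0 < j) :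
    (G j).card = ∑ ℓ ∈ Icc 1 j, ((ℓ ^ 2 + 3 * ℓ + 2) / 2) * Nat.choose (j - 1) (ℓ - 1) := by
  rw [G, Finset.card_biUnion]
  · refine Finset.sum_congr rfl fun ℓ hℓ => ?_
    simp only [mem_Icc] at hℓ
    rw [Finset.card_product, card_compsL' ℓ j hj (by omega), card_pairs, mul_comm]
  · intro a ha b hb hab
    simp only [Finset.disjoint_left, Finset.mem_product, mem_compsL]
    rintro ⟨l, p⟩ ⟨⟨_, _, h1⟩, _⟩ ⟨⟨_, _, h2⟩, _⟩
    exact hab (h1 ▸ h2 ▸ rfl)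

def f (k : ℕ) (x : List ℕ × ℕ × ℕ) : List ℕ :=
  x.1.take x.2.1 ++ k :: ((x.1.drop x.2.1).take (x.2.2 - x.2.1) ++ k :: x.1.drop x.2.2)

lemma f_recover {j k : ℕ} (hj : 0 < j) (hjk : j < k) {x : List ℕ × ℕ × ℕ} (hx : x ∈ G j)
    {A B C : List ℕ} (hA : f k x = A ++ k :: (B ++ k :: C)) (hkA : k ∉ A) (hkB : k ∉ B) :
    x.1 = A ++ (B ++ C) ∧ x.2.1 = A.length ∧ x.2.2 = A.length + B.length := by
  obtain ⟨l, i, i'⟩ := x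
  rw [mem_G hj] at hx
  dsimp only at hx hA ⊢
  obtain ⟨hs, hp, hii, hil⟩ := hx
  have hlt : ∀ y ∈ l, y < k := fun y hy => by
    have := List.le_sum_of_mem hy
    omega
  have hkt : k ∉ l.take i := fun hm => by
    have := hlt k (List.mem_of_mem_take hm); omega
  have hkb : k ∉ (l.drop i).take (i' - i) := fun hm => by
    have := hlt k (List.mem_of_mem_drop (List.mem_of_mem_take hm)); omega
  simp only [f] at hA
  obtain ⟨e1, e2⟩ := split_unique hkt hkA hA
  obtain ⟨e3, e4⟩ := split_unique hkb hkB e2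
  have hBC : B ++ C = l.drop i := by
    rw [← e3, ← e4]
    rw [show l.drop i' = (l.drop i).drop (i' - i) from by rw [List.drop_drop]; congr 1; omega]
    exact List.take_append_drop _ _
  have hlA : A.length = i := by rw [← e1, List.length_take]; omega
  have hlB : B.length = i' - i := by
    rw [← e3, List.length_take, List.length_drop]; omega
  refine ⟨?_, hlA.symm, by omega⟩
  rw [← e1, hBC, List.take_append_drop]

lemma mem_ne_k {j k : ℕ} (hj : 0 < j) (hjk : j < k) {x : List ℕ × ℕ × ℕ} (hx : x ∈ G j) :
    ∀ z ∈ x.1, z < k := by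
  rw [mem_G hj] at hx
  intro z hz
  have := List.le_sum_of_mem hz
  omega

lemma f_injOn {j k : ℕ} (hj : 0 < j) (hjk : j < k) : Set.InjOn (f k) (G j) := by
  intro x hx y hy hxy
  have hA : k ∉ y.1.take y.2.1 := fun hm => by
    have := mem_ne_k hj hjk hy _ (List.mem_of_mem_take hm); omega
  have hB : k ∉ (y.1.drop y.2.1).take (y.2.2 - y.2.1) := fun hm => by
    have := mem_ne_k hj hjk hy _ (List.mem_of_mem_drop (List.mem_of_mem_take hm)); omega
  obtain ⟨h1, h2, h3⟩ := f_recover hj hjk hx hxy hA hB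
  obtain ⟨g1, g2, g3⟩ := f_recover hj hjk hy rfl hA hB
  have e1 : x.1 = y.1 := by rw [h1, ← g1]
  have e2 : x.2.1 = y.2.1 := h2.trans g2.symm
  have e3 : x.2.2 = y.2.2 := h3.trans g3.symm
  exact Prod.ext e1 (Prod.ext e2 e3)

lemma f_mem {j k : ℕ} (hj : 0 < j) (hjk : j < k) {x : List ℕ × ℕ × ℕ} (hx : x ∈ G j) :
    (f k x).sum = 2 * k + j ∧ (∀ z ∈ f k x, 0 < z) ∧ 2 ≤ (f k x).count k := by
  obtain ⟨hs, hp, hii, hil⟩ := (mem_G hj x).1 hx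
  have hsplit : x.1 = x.1.take x.2.1 ++ ((x.1.drop x.2.1).take (x.2.2 - x.2.1) ++ x.1.drop x.2.2) :=
    (f_recover hj hjk hx rfl
      (fun hm => by have := mem_ne_k hj hjk hx _ (List.mem_of_mem_take hm); omega)
      (fun hm => by have := mem_ne_k hj hjk hx _ (List.mem_of_mem_drop (List.mem_of_mem_take hm)); omega)).1
  have hsum : (x.1.take x.2.1).sum + ((x.1.drop x.2.1).take (x.2.2 - x.2.1)).sum
      + (x.1.drop x.2.2).sum = j := by
    have := congrArg List.sum hsplit
    simp only [List.sum_append] at this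
    omega
  refine ⟨?_, ?_, ?_⟩
  · simp only [f, List.sum_append, List.sum_cons]
    omega
  · intro z hz
    simp only [f, List.mem_append, List.mem_cons] at hz
    rcases hz with h | h | h | h | h
    · exact hp z (List.mem_of_mem_take h)
    · omega
    · exact hp z (List.mem_of_mem_drop (List.mem_of_mem_take h))
    · omega
    · exact hp z (List.mem_of_mem_drop h)
  · simp only [f, List.count_append, List.count_cons_self]
    omega

lemma f_surj {j k : ℕ} (hj : 0 < j) (hjk : j < k) {l : List ℕ}
    (hs : l.sum = 2 * k + j) (hp : ∀ z ∈ l, 0 < z) (hc : 2 ≤ l.count k) :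
    ∃ x ∈ G j, f k x = l := by
  obtain ⟨a, b, c, rfl, ha, hb⟩ := split_two hc
  have hsum : a.sum + b.sum + c.sum = j := by
    simp only [List.sum_append, List.sum_cons] at hs
    omega
  refine ⟨(a ++ (b ++ c), a.length, a.length + b.length), ?_, ?_⟩
  · rw [mem_G hj]
    refine ⟨by simp only [List.sum_append]; omega, ?_, Nat.le_add_right _ _,
      by simp only [List.length_append]; omega⟩
    intro z hz
    simp only [List.mem_append] at hz
    rcases hz with h | h | h
    · exact hp z (by simp [h])
    · exact hp z (by simp [h])
    · exact hp z (by simp [h])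
  · show (a ++ (b ++ c)).take a.length ++ k ::
      (((a ++ (b ++ c)).drop a.length).take (a.length + b.length - a.length) ++ k ::
        (a ++ (b ++ c)).drop (a.length + b.length)) = _
    rw [List.take_left, List.drop_left, Nat.add_sub_cancel_left, List.take_left]
    rw [show a ++ (b ++ c) = (a ++ b) ++ c from (List.append_assoc a b c).symm,
      show a.length + b.length = (a ++ b).length from (List.length_append).symm,
      List.drop_left]

end Stmt6

/-- Compositions of `2k + j` with at least two parts equal to `k`. -/
theorem stmt_6 (j k : ℕ) (hj : 0 < j) (hjk : j < k) :
    Nat.card {l : List ℕ // l.sum = 2 * k + j ∧ (∀ x ∈ l, 0 < x) ∧ 2 ≤ l.count k}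
      = ∑ ℓ ∈ Finset.Icc 1 j, ((ℓ ^ 2 + 3 * ℓ + 2) / 2) * Nat.choose (j - 1) (ℓ - 1) := by
  have hset : {l : List ℕ | l.sum = 2 * k + j ∧ (∀ x ∈ l, 0 < x) ∧ 2 ≤ l.count k}
      = ↑((Stmt6.G j).image (Stmt6.f k)) := by
    ext l
    simp only [Set.mem_setOf_eq, Finset.coe_image, Set.mem_image, Finset.mem_coe]
    constructor
    · rintro ⟨hs, hp, hc⟩
      obtain ⟨x, hx, hfx⟩ := Stmt6.f_surj hj hjk hs hp hc
      exact ⟨x, hx, hfx⟩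
    · rintro ⟨x, hx, rfl⟩
      exact Stmt6.f_mem hj hjk hx
  calc Nat.card {l : List ℕ // l.sum = 2 * k + j ∧ (∀ x ∈ l, 0 < x) ∧ 2 ≤ l.count k}
      = Set.ncard {l : List ℕ | l.sum = 2 * k + j ∧ (∀ x ∈ l, 0 < x) ∧ 2 ≤ l.count k} :=
        Nat.card_coe_set_eq _
    _ = ((Stmt6.G j).image (Stmt6.f k)).card := by rw [hset, Set.ncard_coe_finset]
    _ = (Stmt6.G j).card := Finset.card_image_of_injOn (Stmt6.f_injOn hj hjk)
    _ = _ := Stmt6.card_G hj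
end

section
/- For every positive integer j, Σ_{i=1}^{j-1} Σ_{ℓ=3}^{j-i+2} (ℓ² - ℓ) * C(j - i - 1, ℓ - 3) = 2^(j-3) * (j² + 5j + 2) - 2. -/
open Finset

private lemma aux_choose (n k : ℕ) :
    ((k : ℚ) + 1) * (((n + 1).choose (k + 1) : ℕ) : ℚ) = ((n : ℚ) + 1) * (n.choose k : ℚ) := by
  have h := Nat.add_one_mul_choose_eq n k
  have h' : ((n : ℚ) + 1) * (n.choose k : ℚ) = ((n + 1).choose (k + 1) : ℚ) * ((k : ℚ) + 1) := by
    exact_mod_cast h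
  linarith

private lemma aux0 (n : ℕ) : ∑ k ∈ range (n + 1), ((n.choose k : ℕ) : ℚ) = 2 ^ n := by
  exact_mod_cast congrArg (Nat.cast (R := ℚ)) (Nat.sum_range_choose n)

private lemma aux1 (n : ℕ) :
    ∑ k ∈ range (n + 1), 2 * (k : ℚ) * (n.choose k : ℚ) = n * 2 ^ n := by
  cases n with
  | zero => simp
  | succ m =>
    rw [Finset.sum_range_succ']
    have hc : ∀ k ∈ range (m + 1),
        2 * ((k : ℚ) + 1) * ((m + 1).choose (k + 1) : ℚ)
          = 2 * ((m : ℚ) + 1) * (m.choose k : ℚ) := by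
      intro k _
      have := aux_choose m k
      nlinarith [this]
    calc (∑ k ∈ range (m + 1), 2 * ((k : ℕ) + 1 : ℕ) * (((m + 1).choose (k + 1) : ℕ) : ℚ))
          + 2 * ((0 : ℕ) : ℚ) * ((m + 1).choose 0 : ℚ)
        = ∑ k ∈ range (m + 1), 2 * ((m : ℚ) + 1) * (m.choose k : ℚ) := by
          rw [Finset.sum_congr rfl (fun k hk => by push_cast; exact hc k hk)]
          push_cast; ring
      _ = 2 * ((m : ℚ) + 1) * ∑ k ∈ range (m + 1), (m.choose k : ℚ) := by
          rw [Finset.mul_sum]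
      _ = (↑(m + 1) : ℚ) * 2 ^ (m + 1) := by rw [aux0]; push_cast; ring

private lemma aux2 (n : ℕ) :
    ∑ k ∈ range (n + 1), 4 * (k : ℚ) * ((k : ℚ) - 1) * (n.choose k : ℚ)
      = n * ((n : ℚ) - 1) * 2 ^ n := by
  cases n with
  | zero => simp
  | succ m =>
    rw [Finset.sum_range_succ']
    have hc : ∀ k ∈ range (m + 1),
        4 * ((k : ℚ) + 1) * (((k : ℚ) + 1) - 1) * ((m + 1).choose (k + 1) : ℚ)
          = 2 * ((m : ℚ) + 1) * (2 * (k : ℚ) * (m.choose k : ℚ)) := by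
      intro k _
      have := aux_choose m k
      nlinarith [this]
    calc (∑ k ∈ range (m + 1),
            4 * ((k : ℕ) + 1 : ℕ) * (((k : ℕ) + 1 : ℕ) - 1 : ℚ) * (((m + 1).choose (k + 1) : ℕ) : ℚ))
          + 4 * ((0 : ℕ) : ℚ) * (((0 : ℕ) : ℚ) - 1) * ((m + 1).choose 0 : ℚ)
        = ∑ k ∈ range (m + 1), 2 * ((m : ℚ) + 1) * (2 * (k : ℚ) * (m.choose k : ℚ)) := by
          rw [Finset.sum_congr rfl (fun k hk => by push_cast; exact hc k hk)]
          push_cast; ring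
      _ = 2 * ((m : ℚ) + 1) * ∑ k ∈ range (m + 1), 2 * (k : ℚ) * (m.choose k : ℚ) := by
          rw [Finset.mul_sum]
      _ = (↑(m + 1) : ℚ) * ((↑(m + 1) : ℚ) - 1) * 2 ^ (m + 1) := by
          rw [aux1]; push_cast; ring

private lemma aux3 (n : ℕ) :
    8 * ∑ ℓ ∈ Finset.Icc 3 (n + 3), ((ℓ : ℚ) ^ 2 - ℓ) * (n.choose (ℓ - 3) : ℚ)
      = 2 ^ n * (2 * (n : ℚ) ^ 2 + 22 * n + 48) := by
  have hIcc : Finset.Icc 3 (n + 3) = Finset.Ico 3 (n + 4) := by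
    exact (Finset.Ico_add_one_right_eq_Icc ..).symm
  rw [hIcc, Finset.sum_Ico_eq_sum_range]
  have hn : n + 4 - 3 = n + 1 := by omega
  rw [hn]
  have hterm : ∀ k ∈ range (n + 1),
      (((3 + k : ℕ) : ℚ) ^ 2 - ((3 + k : ℕ) : ℚ)) * (n.choose (3 + k - 3) : ℚ)
        = ((k : ℚ) ^ 2 + 5 * k + 6) * (n.choose k : ℚ) := by
    intro k _
    have : 3 + k - 3 = k := by omega
    rw [this]; push_cast; ring
  rw [Finset.sum_congr rfl hterm]
  have split : ∀ k : ℕ,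
      8 * (((k : ℚ) ^ 2 + 5 * k + 6) * (n.choose k : ℚ))
        = 2 * (4 * (k : ℚ) * ((k : ℚ) - 1) * (n.choose k : ℚ))
          + 24 * (2 * (k : ℚ) * (n.choose k : ℚ)) + 48 * ((n.choose k : ℚ)) := by
    intro k; ring
  rw [Finset.mul_sum]
  rw [Finset.sum_congr rfl (fun k _ => split k)]
  rw [Finset.sum_add_distrib, Finset.sum_add_distrib, ← Finset.mul_sum, ← Finset.mul_sum,
    ← Finset.mul_sum, aux0, aux1, aux2]
  ring

private lemma aux4 (M : ℕ) :
    ∑ k ∈ range M, (2 : ℚ) ^ k * (2 * (k : ℚ) ^ 2 + 22 * k + 48)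
      = 2 ^ (M + 1) * ((M : ℚ) ^ 2 + 7 * M + 8) - 16 := by
  induction M with
  | zero => norm_num
  | succ m ih =>
    rw [Finset.sum_range_succ, ih]
    push_cast
    ring

theorem stmt_19 (j : ℕ) (hj : 0 < j) :
    ∑ i ∈ Finset.Icc 1 (j - 1), ∑ ℓ ∈ Finset.Icc 3 (j - i + 2),
        ((ℓ : ℚ) ^ 2 - ℓ) * (Nat.choose (j - i - 1) (ℓ - 3) : ℚ)
      = 2 ^ ((j : ℤ) - 3) * ((j : ℚ) ^ 2 + 5 * j + 2) - 2 := by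
  obtain ⟨M, rfl⟩ : ∃ M, j = M + 1 := ⟨j - 1, by omega⟩
  -- define the inner sum as a function of m = j - i
  set g : ℕ → ℚ := fun m => ∑ ℓ ∈ Finset.Icc 3 (m + 2),
      ((ℓ : ℚ) ^ 2 - ℓ) * (Nat.choose (m - 1) (ℓ - 3) : ℚ) with hg
  have hLHS : ∑ i ∈ Finset.Icc 1 (M + 1 - 1), ∑ ℓ ∈ Finset.Icc 3 (M + 1 - i + 2),
        ((ℓ : ℚ) ^ 2 - ℓ) * (Nat.choose (M + 1 - i - 1) (ℓ - 3) : ℚ)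
      = ∑ i ∈ Finset.Icc 1 M, g (M + 1 - i) := by
    apply Finset.sum_congr (by norm_num)
    intro i hi
    simp only [hg]
  rw [hLHS]
  -- convert to range and reflect
  have h1 : ∑ i ∈ Finset.Icc 1 M, g (M + 1 - i) = ∑ k ∈ range M, g (M - k) := by
    rw [show Finset.Icc 1 M = Finset.Ico 1 (M + 1) by rw [Finset.Ico_add_one_right_eq_Icc],
      Finset.sum_Ico_eq_sum_range]
    apply Finset.sum_congr (by congr 1)
    intro k hk
    have : M + 1 - (1 + k) = M - k := by omega
    rw [this]
  have h2 : ∑ k ∈ range M, g (M - k) = ∑ k ∈ range M, g (k + 1) := by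
    rw [← Finset.sum_range_reflect (fun k => g (k + 1)) M]
    apply Finset.sum_congr rfl
    intro k hk
    rw [Finset.mem_range] at hk
    have : M - 1 - k + 1 = M - k := by omega
    rw [this]
  rw [h1, h2]
  have h3 : ∀ k, 8 * g (k + 1) = 2 ^ k * (2 * (k : ℚ) ^ 2 + 22 * k + 48) := by
    intro k
    have := aux3 k
    simp only [hg]
    rw [show k + 1 + 2 = k + 3 by ring, show k + 1 - 1 = k by omega]
    exact this
  have h8 : 8 * ∑ k ∈ range M, g (k + 1)
      = 2 ^ (M + 1) * ((M : ℚ) ^ 2 + 7 * M + 8) - 16 := by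
    rw [Finset.mul_sum, Finset.sum_congr rfl (fun k _ => h3 k), aux4]
  -- handle the RHS power
  have hpow : (2 : ℚ) ^ ((M + 1 : ℕ) : ℤ) / 8 = (2 : ℚ) ^ (((M + 1 : ℕ) : ℤ) - 3) := by
    rw [zpow_sub₀ (by norm_num : (2 : ℚ) ≠ 0)]
    norm_num
  rw [← hpow]
  have hzp : (2 : ℚ) ^ ((M + 1 : ℕ) : ℤ) = 2 ^ (M + 1) := by
    rw [zpow_natCast]
  rw [hzp]
  push_cast
  push_cast at h8
  linarith [h8]
end
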